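/- Let A be a finite d-regular λ-expander and S ⊆ A with |S| = ρ|A|. Then for all t ≥ 1, the probability that a uniformly random t-step walk (a_1,…,a_t) in A has all vertices in S is at most ρ·(ρ + λ(1−ρ))^{t−1}. -/
import Mathlib


open Finset

noncomputable def expec {V : Type*} [Fintype V] (f : V → ℝ) : ℝ :=
  (∑ a, f a) / (Fintype.card V : ℝ)

noncomputable def sdev {V : Type*} [Fintype V] (f : V → ℝ) : ℝ :=
  Real.sqrt (expec (fun a => f a ^ 2) - (expec f) ^ 2)

noncomputable def edgeE {V : Type*} [Fintype V] {d : ℕ} (N : V → Fin d → V)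
    (F : V → V → ℝ) : ℝ :=
  (∑ a, ∑ i, F a (N a i)) / ((Fintype.card V : ℝ) * d)

/-- `A` is a `lam`-expander in the mixing-lemma sense. -/
def IsExpander {V : Type*} [Fintype V] {d : ℕ} (N : V → Fin d → V) (lam : ℝ) : Prop :=
  ∀ f g : V → ℝ,
    |edgeE N (fun a a' => f a * g a') - expec f * expec g| ≤ lam * sdev f * sdev g

/-- The graph given by the rotation map `N` is undirected (the edge multiset is symmetric). -/
def SymmGraph {V : Type*} [Fintype V] {d : ℕ} (N : V → Fin d → V) : Prop :=
  ∀ F : V → V → ℝ, (∑ a, ∑ i, F a (N a i)) = ∑ a, ∑ i, F (N a i) a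

/-- Probability that a k-vertex walk started at `a` stays inside `S`. -/
noncomputable def gS {V : Type*} [DecidableEq V] {d : ℕ} (N : V → Fin d → V) (S : Finset V) :
    ℕ → V → ℝ
  | 0, _ => 1
  | k + 1, a => (if a ∈ S then (1 : ℝ) else 0) * ((∑ i, gS N S k (N a i)) / d)

lemma gS_nonneg {V : Type*} [Fintype V] [DecidableEq V] {d : ℕ} (N : V → Fin d → V)
    (S : Finset V) : ∀ k a, 0 ≤ gS N S k a := by
  intro k
  induction k with
  | zero => intro a; simp [gS]
  | succ k ih =>
    intro a
    simp only [gS]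
    apply mul_nonneg
    · split_ifs <;> norm_num
    · exact div_nonneg (Finset.sum_nonneg fun i _ => ih _) (Nat.cast_nonneg d)

/-- Numeric core of the expander mixing argument. -/
lemma key_numeric (lam ρ a b U W : ℝ) (hl0 : 0 ≤ lam) (hl1 : lam ≤ 1)
    (hρ0 : 0 ≤ ρ) (hρ1 : ρ ≤ 1) (ha : 0 ≤ a) (hb : 0 ≤ b) (hU : 0 ≤ U) (hW : 0 ≤ W)
    (hau : a ^ 2 ≤ ρ * U) (hbw : b ^ 2 ≤ ρ * W)
    (h : U ≤ a * b + lam * Real.sqrt (U - a ^ 2) * Real.sqrt (W - b ^ 2)) :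
    U ≤ (ρ + lam * (1 - ρ)) ^ 2 * W := by
  set β := ρ + lam * (1 - ρ) with hβdef
  have hβ : 0 ≤ β := by nlinarith
  have hUa : a ^ 2 ≤ U := le_trans hau (by nlinarith)
  have hWb : b ^ 2 ≤ W := le_trans hbw (by nlinarith)
  set X := Real.sqrt (U - a ^ 2) with hXdef
  set Y := Real.sqrt (W - b ^ 2) with hYdef
  have hX0 : 0 ≤ X := Real.sqrt_nonneg _
  have hY0 : 0 ≤ Y := Real.sqrt_nonneg _
  have hX2 : X ^ 2 = U - a ^ 2 := Real.sq_sqrt (by linarith)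
  have hY2 : Y ^ 2 = W - b ^ 2 := Real.sq_sqrt (by linarith)
  clear_value β X Y
  have h1 : a ^ 2 + lam * X ^ 2 ≤ β * U := by rw [hX2]; nlinarith
  have h2 : b ^ 2 + lam * Y ^ 2 ≤ β * W := by rw [hY2]; nlinarith
  have h3 : (a * b + lam * X * Y) ^ 2 ≤ (a ^ 2 + lam * X ^ 2) * (b ^ 2 + lam * Y ^ 2) := by
    nlinarith [mul_nonneg hl0 (sq_nonneg (a * Y - b * X)), sq_nonneg (X * Y)]
  have h4 : (a ^ 2 + lam * X ^ 2) * (b ^ 2 + lam * Y ^ 2) ≤ (β * U) * (β * W) :=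
    mul_le_mul h1 h2 (by positivity) (by positivity)
  have hR0 : 0 ≤ a * b + lam * X * Y := by positivity
  have h5 : U ^ 2 ≤ β ^ 2 * U * W := by nlinarith
  rcases hU.eq_or_lt with h0 | h0
  · rw [← h0]; positivity
  · have h6 : U * U ≤ U * (β ^ 2 * W) := by
      calc U * U = U ^ 2 := by ring
        _ ≤ β ^ 2 * U * W := h5
        _ = U * (β ^ 2 * W) := by ring
    exact le_of_mul_le_mul_left h6 h0

/-- Expander hitting set lemma: a uniform t-step walk stays in S with probability at most
ρ(ρ + lam(1-ρ))^{t-1}. -/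
theorem stmt9 {V : Type*} [Fintype V] [DecidableEq V] [Nonempty V] {d : ℕ} (hd : 0 < d)
    (N : V → Fin d → V) (lam : ℝ) (hlam0 : 0 ≤ lam) (hlam1 : lam ≤ 1)
    (hexp : IsExpander N lam) (hsymm : SymmGraph N)
    (S : Finset V) (ρ : ℝ) (hρ : (S.card : ℝ) = ρ * Fintype.card V) :
    ∀ t : ℕ, 1 ≤ t →
      expec (gS N S t) ≤ ρ * (ρ + lam * (1 - ρ)) ^ (t - 1) := by
  have hn : (0 : ℝ) < (Fintype.card V : ℝ) := by exact_mod_cast Fintype.card_pos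
  have hdR : (0 : ℝ) < (d : ℝ) := by exact_mod_cast hd
  have hρ' : ρ = (S.card : ℝ) / (Fintype.card V : ℝ) := by
    rw [hρ]; field_simp
  have hρ0 : 0 ≤ ρ := by rw [hρ']; positivity
  have hρ1 : ρ ≤ 1 := by
    rw [hρ', div_le_one hn]
    exact_mod_cast Finset.card_le_univ S
  set β := ρ + lam * (1 - ρ) with hβdef
  have hβ0 : 0 ≤ β := by nlinarith
  have expec_nonneg : ∀ f : V → ℝ, (∀ a, 0 ≤ f a) → 0 ≤ expec f := fun f hf =>
    div_nonneg (Finset.sum_nonneg fun a _ => hf a) hn.le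
  -- Cauchy–Schwarz for functions vanishing off S
  have cs : ∀ f : V → ℝ, (∀ a ∉ S, f a = 0) →
      (expec f) ^ 2 ≤ ρ * expec (fun a => f a ^ 2) := by
    intro f hf
    have h1 : (∑ a, f a) = ∑ a, (if a ∈ S then (1 : ℝ) else 0) * f a := by
      apply Finset.sum_congr rfl
      intro a _
      by_cases ha : a ∈ S
      · simp [ha]
      · simp [ha, hf a ha]
    have h2 : (∑ a, (if a ∈ S then (1 : ℝ) else 0) * f a) ^ 2
        ≤ (∑ a, (if a ∈ S then (1 : ℝ) else 0) ^ 2) * ∑ a, f a ^ 2 :=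
      Finset.sum_mul_sq_le_sq_mul_sq _ _ _
    have h3 : (∑ a, (if a ∈ S then (1 : ℝ) else 0) ^ 2) = (S.card : ℝ) := by
      have hpt : ∀ a : V, (if a ∈ S then (1 : ℝ) else 0) ^ 2 = (if a ∈ S then (1 : ℝ) else 0) := by
        intro a; split_ifs <;> norm_num
      simp only [hpt]
      simp
    have h4 : (∑ a, f a) ^ 2 ≤ (S.card : ℝ) * ∑ a, f a ^ 2 := by
      rw [h1]; rw [h3] at h2; exact h2
    show ((∑ a, f a) / (Fintype.card V : ℝ)) ^ 2
        ≤ ρ * ((∑ a, f a ^ 2) / (Fintype.card V : ℝ))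
    rw [hρ', div_pow, div_mul_div_comm, pow_two (Fintype.card V : ℝ)]
    exact div_le_div_of_nonneg_right h4 (by positivity) |>.trans (le_refl _)
  -- support lemmas
  have hsupp : ∀ k, ∀ a ∉ S, gS N S (k + 1) a = 0 := by
    intro k a ha; simp [gS, ha]
  -- gS 1 = indicator
  have hg1 : ∀ a, gS N S 1 a = (if a ∈ S then (1 : ℝ) else 0) := by
    intro a
    simp only [gS, Finset.sum_const, Finset.card_univ, Fintype.card_fin, nsmul_eq_mul, mul_one]
    rw [div_self hdR.ne']
    ring
  -- main second-moment induction
  have main : ∀ m : ℕ, expec (fun a => gS N S (m + 1) a ^ 2) ≤ ρ * β ^ (2 * m) := by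
    intro m
    induction m with
    | zero =>
      have e : expec (fun a => gS N S (0 + 1) a ^ 2) = ρ := by
        show (∑ a, gS N S (0 + 1) a ^ 2) / (Fintype.card V : ℝ) = ρ
        rw [hρ']
        congr 1
        have hpt : ∀ a : V, gS N S (0 + 1) a ^ 2 = (if a ∈ S then (1 : ℝ) else 0) := by
          intro a
          rw [show (0 + 1 : ℕ) = 1 from rfl, hg1 a]
          split_ifs <;> norm_num
        simp only [hpt]
        simp
      rw [e]
      simp [hρ0]
    | succ m ih =>
      have hU0 : 0 ≤ expec (fun a => gS N S (m + 1 + 1) a ^ 2) :=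
        expec_nonneg _ fun a => sq_nonneg _
      have hW0 : 0 ≤ expec (fun a => gS N S (m + 1) a ^ 2) :=
        expec_nonneg _ fun a => sq_nonneg _
      have ha0 : 0 ≤ expec (gS N S (m + 1 + 1)) :=
        expec_nonneg _ fun a => gS_nonneg N S _ a
      have hb0 : 0 ≤ expec (gS N S (m + 1)) :=
        expec_nonneg _ fun a => gS_nonneg N S _ a
      have hau := cs _ (hsupp (m + 1))
      have hbw := cs _ (hsupp m)
      have ptw : ∀ a, gS N S (m + 1 + 1) a ^ 2 * d
          = ∑ i, gS N S (m + 1 + 1) a * gS N S (m + 1) (N a i) := by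
        intro a
        by_cases ha : a ∈ S
        · have hh : gS N S (m + 1 + 1) a = (∑ i, gS N S (m + 1) (N a i)) / d := by
            simp only [gS, if_pos ha, one_mul]
          rw [← Finset.mul_sum, hh]
          field_simp
        · simp [gS, ha]
      have e1 : expec (fun a => gS N S (m + 1 + 1) a ^ 2)
          = edgeE N (fun a a' => gS N S (m + 1 + 1) a * gS N S (m + 1) a') := by
        show (∑ a, gS N S (m + 1 + 1) a ^ 2) / (Fintype.card V : ℝ)
            = (∑ a, ∑ i, gS N S (m + 1 + 1) a * gS N S (m + 1) (N a i))
              / ((Fintype.card V : ℝ) * d)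
        have hsum : (∑ a, ∑ i, gS N S (m + 1 + 1) a * gS N S (m + 1) (N a i))
            = (∑ a, gS N S (m + 1 + 1) a ^ 2) * d := by
          rw [Finset.sum_mul]
          exact Finset.sum_congr rfl fun a _ => (ptw a).symm
        rw [hsum, mul_div_mul_right _ _ hdR.ne']
      have e2 := hexp (gS N S (m + 1 + 1)) (gS N S (m + 1))
      rw [← e1] at e2
      simp only [sdev] at e2
      have e3 : expec (fun a => gS N S (m + 1 + 1) a ^ 2)
          ≤ expec (gS N S (m + 1 + 1)) * expec (gS N S (m + 1))
            + lam * Real.sqrt (expec (fun a => gS N S (m + 1 + 1) a ^ 2)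
                - expec (gS N S (m + 1 + 1)) ^ 2)
              * Real.sqrt (expec (fun a => gS N S (m + 1) a ^ 2)
                - expec (gS N S (m + 1)) ^ 2) := by
        have := (abs_le.mp e2).2
        linarith
      have key := key_numeric lam ρ _ _ _ _ hlam0 hlam1 hρ0 hρ1 ha0 hb0 hU0 hW0 hau hbw e3
      calc expec (fun a => gS N S (m + 1 + 1) a ^ 2)
          ≤ β ^ 2 * expec (fun a => gS N S (m + 1) a ^ 2) := key
        _ ≤ β ^ 2 * (ρ * β ^ (2 * m)) := by
            exact mul_le_mul_of_nonneg_left ih (by positivity)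
        _ = ρ * β ^ (2 * (m + 1)) := by ring
  -- conclusion
  intro t ht
  obtain ⟨m, rfl⟩ : ∃ m, t = m + 1 := ⟨t - 1, (Nat.succ_pred_eq_of_pos ht).symm⟩
  simp only [Nat.add_sub_cancel]
  have hE0 : 0 ≤ expec (gS N S (m + 1)) := expec_nonneg _ fun a => gS_nonneg N S _ a
  have h1 := cs _ (hsupp m)
  have h2 : ρ * expec (fun a => gS N S (m + 1) a ^ 2) ≤ ρ * (ρ * β ^ (2 * m)) :=
    mul_le_mul_of_nonneg_left (main m) hρ0
  have h3 : ρ * (ρ * β ^ (2 * m)) = (ρ * β ^ m) ^ 2 := by ring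
  have h4 : expec (gS N S (m + 1)) ^ 2 ≤ (ρ * β ^ m) ^ 2 := by
    rw [← h3]; exact h1.trans h2
  have h5 := Real.sqrt_le_sqrt h4
  rwa [Real.sqrt_sq hE0, Real.sqrt_sq (by positivity)] at h5
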